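/- arXiv:2512.10053 — 2 statements merged into one kernel-verified Lean document; each statement's English description precedes it below -/
import Mathlib

section
/- A function f : ℝ⁴ → ℝ on confusion-matrix entries (TP, FP, FN, TN) satisfies f(TP, FP, FN, TN) = f(TP + δ₁, FP − δ₂, FN + δ₂, TN − δ₁) for all real δ₁, δ₂ if and only if there exists a function g : ℝ² → ℝ such that f(TP, FP, FN, TN) = g(TP + TN, FP + FN) for all TP, FP, FN, TN. -/
theorem apply_eq_apply_totals_zero {α β : Type*} [AddCommGroup α] {f : α → α → α → α → β}
    (hf : ∀ TP FP FN TN δ₁ δ₂ : α,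
      f TP FP FN TN = f (TP + δ₁) (FP - δ₂) (FN + δ₂) (TN - δ₁))
    (TP FP FN TN : α) :
    f TP FP FN TN = f (TP + TN) (FP + FN) 0 0 := by
  simpa using hf TP FP FN TN TN (-FN)

/-- LxC-invariance characterization for categorical metrics. -/
theorem stmt_0 (f : ℝ → ℝ → ℝ → ℝ → ℝ) :
    (∀ TP FP FN TN δ₁ δ₂ : ℝ,
        f TP FP FN TN = f (TP + δ₁) (FP - δ₂) (FN + δ₂) (TN - δ₁)) ↔
    (∃ g : ℝ → ℝ → ℝ, ∀ TP FP FN TN : ℝ,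
        f TP FP FN TN = g (TP + TN) (FP + FN)) := by
  constructor
  · intro hf
    exact ⟨fun C I => f C I 0 0, apply_eq_apply_totals_zero hf⟩
  · rintro ⟨g, hg⟩ TP FP FN TN δ₁ δ₂
    rw [hg, hg]
    congr 1 <;> ring
end

section
/- Let y : [0,1] → {0,1} be measurable, G(t) = ∫₀ᵗ y(w) dw, and H = ∫₀¹ G(t)(1 − y(t)) dt. Then 2∫₀¹ G(t) dt = G(1)² + 2H. -/
/-!
The primitive `G` of `y` is absolutely continuous with `G' = y` almost everywhere, so the
fundamental theorem of calculus for absolutely continuous functions, applied to `G²`, gives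
`2 ∫₀¹ G y = G(1)²`. Splitting `G = G y + G (1 - y)` under the integral finishes the proof.
-/

open MeasureTheory Set intervalIntegral

theorem intervalIntegral.two_mul_integral_mul_primitive_self {f : ℝ → ℝ} {a b : ℝ}
    (hf : IntervalIntegrable f volume a b) :
    2 * ∫ x in a..b, f x * ∫ t in a..x, f t = (∫ x in a..b, f x) ^ 2 := by
  set F : ℝ → ℝ := fun x => ∫ t in a..x, f t
  have hF : AbsolutelyContinuousOnInterval F a b :=
    hf.absolutelyContinuousOnInterval_intervalIntegral left_mem_uIcc
  have hderiv : ∀ᵐ x, x ∈ uIoc a b → deriv F x = f x := by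
    filter_upwards [hf.ae_hasDerivAt_integral] with x hx hxab
    exact (hx (uIoc_subset_uIcc hxab) a left_mem_uIcc).deriv
  calc 2 * ∫ x in a..b, f x * F x = ∫ x in a..b, deriv F x * F x + F x * deriv F x := by
        rw [← integral_const_mul]
        refine integral_congr_ae (hderiv.mono fun x hx hxab => ?_)
        rw [hx hxab]
        ring
    _ = F b * F b - F a * F a := hF.integral_deriv_mul_eq_sub hF
    _ = (∫ x in a..b, f x) ^ 2 := by simp [F, sq]

/-- 2∫₀¹ G = G(1)² + 2H with H = ∫₀¹ G·(1−y), for G(t) = ∫₀ᵗ y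
(LxCIM = ACC² + 2H). -/
theorem stmt_11 (y : ℝ → ℝ) (hmeas : Measurable y)
    (hvals : ∀ t, y t = 0 ∨ y t = 1) :
    let G : ℝ → ℝ := fun t => ∫ w in (0 : ℝ)..t, y w
    let H : ℝ := ∫ t in (0 : ℝ)..1, G t * (1 - y t)
    2 * ∫ t in (0 : ℝ)..1, G t = G 1 ^ 2 + 2 * H := by
  intro G H
  have hy : ∀ a b : ℝ, IntervalIntegrable y volume a b := fun a b =>
    (intervalIntegrable_const (c := (1 : ℝ))).mono_fun hmeas.aestronglyMeasurable <|
      Filter.Eventually.of_forall fun t => by rcases hvals t with h | h <;> simp [h]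
  have hG : Continuous G := continuous_primitive hy 0
  have hGy : 2 * ∫ t in (0 : ℝ)..1, G t * y t = G 1 ^ 2 := by
    simpa only [mul_comm (y _)] using two_mul_integral_mul_primitive_self (hy 0 1)
  have hH : H = (∫ t in (0 : ℝ)..1, G t) - ∫ t in (0 : ℝ)..1, G t * y t := by
    rw [← integral_sub (hG.intervalIntegrable 0 1) ((hy 0 1).continuousOn_mul hG.continuousOn)]
    simp only [H, mul_sub, mul_one]
  rw [hH]
  linarith
end
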